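/- Let μ ≤ λ be infinite cardinals with μ regular, and suppose λ is not the successor of a cardinal of cofinality less than μ and there is an unbounded set of almost μ-closed cardinals below λ. Then for every θ < λ we have θ^{<μ} < λ. -/

import Mathlib

/-!
A cardinal `θ < λ` lies below some almost `μ`-closed `ν < λ`. If `θ < ν` then `θ^{<μ} ≤ ν < λ`.
If `θ = ν` has cofinality `≥ μ`, every function from `κ < μ` into `θ` is bounded below `θ`, so
`θ^κ ≤ θ · sup_{σ<θ} σ^κ ≤ θ`. If `θ = ν` has cofinality `< μ`, then `λ ≠ θ⁺`, so `θ⁺ < λ` and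
there is an almost `μ`-closed cardinal in `(θ, λ)`.
-/

open Cardinal

universe u

def AlmostMuClosed (μ ν : Cardinal.{u}) : Prop := ∀ σ < ν, σ ^< μ ≤ ν

theorem Order.mk_fun_le_sum_of_lt_cof {ι α : Type u} [LinearOrder α] (hι : #ι < Order.cof α) :
    #(ι → α) ≤ Cardinal.sum fun b : α ↦ #(Set.Iio b) ^ #ι := by
  have bounded (f : ι → α) : ∃ b, ∀ i, f i < b := by
    have : ¬ IsCofinal (Set.range f) := fun h ↦ (Order.cof_le h).trans mk_range_le |>.not_gt hι
    simpa using not_isCofinal_iff.1 this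
  choose bound hbound using bounded
  simp only [power_def, ← mk_sigma]
  refine mk_le_of_injective (f := fun f ↦ ⟨bound f, fun i ↦ ⟨f i, hbound f i⟩⟩) fun f g hfg ↦ ?_
  exact funext fun i ↦ congrArg (fun p : Σ b : α, ι → Set.Iio b ↦ (p.2 i : α)) hfg

theorem Cardinal.power_le_self_of_lt_cof {c κ : Cardinal.{u}} (hc : ℵ₀ ≤ c) (hκ : κ < c.ord.cof)
    (h : ∀ σ < c, σ ^ κ ≤ c) : c ^ κ ≤ c := by
  rw [← Ordinal.cof_toType, ← mk_out κ] at hκ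
  calc c ^ κ = #(κ.out → c.ord.ToType) := by rw [← power_def, mk_out, mk_ord_toType]
    _ ≤ Cardinal.sum fun b : c.ord.ToType ↦ #(Set.Iio b) ^ #κ.out :=
      Order.mk_fun_le_sum_of_lt_cof hκ
    _ ≤ Cardinal.sum fun _ : c.ord.ToType ↦ c :=
      sum_le_sum _ _ fun b ↦ by
        rw [mk_out]
        exact h _ ((mk_Iio_lt b (by simp)).trans_eq (mk_ord_toType c))
    _ = c := by rw [sum_const', mk_ord_toType, mul_eq_self hc]

theorem AlmostMuClosed.powerlt_le_self {μ ν : Cardinal.{u}} (hν : AlmostMuClosed μ ν)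
    (hν₀ : ℵ₀ ≤ ν) (hμν : μ ≤ ν.ord.cof) : ν ^< μ ≤ ν :=
  powerlt_le.2 fun _ hκ ↦ power_le_self_of_lt_cof hν₀ (hκ.trans_le hμν) fun σ hσ ↦
    (le_powerlt σ hκ).trans (hν σ hσ)

theorem stmt19_general (μ l : Cardinal.{u}) (hμ : μ.IsRegular)
    (hnsucc : ¬ ∃ l₀ : Cardinal.{u}, l = Order.succ l₀ ∧ l₀.ord.cof < μ)
    (hunb : ∀ θ < l, ∃ ν : Cardinal.{u}, θ ≤ ν ∧ ν < l ∧ AlmostMuClosed μ ν) :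
    ∀ θ < l, θ ^< μ < l := by
  intro θ hθ
  obtain ⟨ν, hθν, hνl, hν⟩ := hunb θ hθ
  rcases hθν.lt_or_eq with hθν | rfl
  · exact (hν θ hθν).trans_lt hνl
  rcases lt_or_ge θ.ord.cof μ with hcof | hcof
  · have hsucc : Order.succ θ < l :=
      (Order.succ_le_of_lt hνl).lt_of_ne fun h ↦ hnsucc ⟨θ, h.symm, hcof⟩
    obtain ⟨ν', hθν', hν'l, hν'⟩ := hunb _ hsucc
    exact (hν' θ ((Order.lt_succ θ).trans_le hθν')).trans_lt hν'l
  · have hθ₀ : ℵ₀ ≤ θ := hμ.aleph0_le.trans (hcof.trans (Ordinal.cof_ord_le θ))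
    exact (hν.powerlt_le_self hθ₀ hcof).trans_lt hνl

/-- If `μ ≤ λ` are infinite with `μ` regular, `λ` is not the successor of a cardinal of
cofinality less than `μ`, and there is an unbounded set of almost `μ`-closed cardinals
below `λ`, then `θ^{<μ} < λ` for all `θ < λ`. -/
theorem stmt19 (μ l : Cardinal.{u}) (hμ : μ.IsRegular) (hl : ℵ₀ ≤ l) (hμl : μ ≤ l)
    (hnsucc : ¬ ∃ l₀ : Cardinal.{u}, l = Order.succ l₀ ∧ l₀.ord.cof < μ)
    (hunb : ∀ θ < l, ∃ ν : Cardinal.{u}, θ ≤ ν ∧ ν < l ∧ AlmostMuClosed μ ν) :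
    ∀ θ < l, θ ^< μ < l :=
  stmt19_general μ l hμ hnsucc hunb
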